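/- Let φ : D → ℂ be a smooth map on the closed unit disk satisfying ∂̄φ = σ for a constant σ ∈ ℂ (i.e. ∂φ/∂x + i ∂φ/∂y = 2σ), and suppose |φ(ζ)| ≤ R for all ζ ∈ ∂D. Then |σ| ≤ R. -/

import Mathlib

/-!
Subtracting `σ * conj z` from `φ` kills its `∂̄`-derivative, so `φ - σ * conj z` is holomorphic
and its integral over the unit circle vanishes. Since `conj z = z⁻¹` on that circle,
`∮ φ = σ ∮ z⁻¹ = 2πiσ`, and the standard estimate `‖∮ φ‖ ≤ 2π sup ‖φ‖` gives `|σ| ≤ R`.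
-/

open Complex ComplexConjugate Metric Real

theorem differentiableAt_complex_sub_const_mul_conj {f : ℂ → ℂ} {z σ : ℂ}
    (hf : DifferentiableAt ℝ f z)
    (hdbar : fderiv ℝ f z 1 + I * fderiv ℝ f z I = 2 * σ) :
    DifferentiableAt ℂ (fun w => f w - σ * conj w) z := by
  have hconj : HasFDerivAt (fun w : ℂ => σ * conj w) (σ • conjCLE.toContinuousLinearMap) z :=
    conjCLE.hasFDerivAt.const_smul σ
  have hderiv : fderiv ℝ (fun w => f w - σ * conj w) z =
      fderiv ℝ f z - σ • conjCLE.toContinuousLinearMap :=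
    (hf.hasFDerivAt.sub hconj).fderiv
  refine differentiableAt_complex_iff_differentiableAt_real.2
    ⟨hf.sub hconj.differentiableAt, ?_⟩
  simp only [hderiv, sub_apply, smul_apply, ContinuousLinearEquiv.coe_coe, conjCLE_apply,
    conj_I, map_one, smul_eq_mul]
  linear_combination (-I) * hdbar + fderiv ℝ f z I * I_mul_I

theorem circleIntegral_conj (c : ℂ) {R : ℝ} (hR : 0 ≤ R) :
    (∮ z in C(c, R), conj z) = 2 * π * I * R ^ 2 := by
  rcases hR.eq_or_lt with rfl | hR
  · simp [circleIntegral.integral_radius_zero]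
  -- `conj z = conj c + R ^ 2 / (z - c)` on the circle; the constant is written as `(z - c) ^ 0`
  -- so that `integral_sub_zpow_of_ne` applies to it
  have hsphere : Set.EqOn (fun z => conj z) (fun z => conj c * (z - c) ^ (0 : ℤ) +
      (R ^ 2 : ℂ) * (z - c)⁻¹) (sphere c R) := by
    intro z hz
    have hne : z - c ≠ 0 := sub_ne_zero.2 (ne_of_mem_sphere hz hR.ne')
    have hnorm : ‖z - c‖ = R := by simpa [dist_eq_norm] using hz
    have hmul : (z - c) * (conj z - conj c) = (R ^ 2 : ℂ) := by
      rw [← map_sub, mul_conj, normSq_eq_norm_sq, hnorm]; push_cast; ring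
    field_simp
    linear_combination hmul
  rw [circleIntegral.integral_congr hR.le hsphere, circleIntegral.integral_add,
    circleIntegral.integral_const_mul, circleIntegral.integral_const_mul,
    circleIntegral.integral_sub_zpow_of_ne (by decide),
    circleIntegral.integral_sub_center_inv c hR.ne']
  · ring
  · simp
  · exact (circleIntegrable_sub_inv_iff.2
      (Or.inr (by simp [abs_of_pos hR, hR.ne]))).const_fun_smul

theorem circleIntegral_eq_of_dbar_eq_const {f : ℂ → ℂ} {c σ : ℂ} {R : ℝ} (hR : 0 ≤ R)
    (hcont : ContinuousOn f (closedBall c R))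
    (hdiff : ∀ z ∈ ball c R, DifferentiableAt ℝ f z)
    (hdbar : ∀ z ∈ ball c R, fderiv ℝ f z 1 + I * fderiv ℝ f z I = 2 * σ) :
    (∮ z in C(c, R), f z) = 2 * π * I * R ^ 2 * σ := by
  have hconj : Continuous fun z : ℂ => σ * conj z := continuous_const.mul continuous_conj
  have hcauchy : (∮ z in C(c, R), (f z - σ * conj z)) = 0 :=
    circleIntegral_eq_zero_of_differentiable_on_off_countable hR Set.countable_empty
      (hcont.sub hconj.continuousOn) fun z hz =>
        differentiableAt_complex_sub_const_mul_conj (hdiff z hz.1) (hdbar z hz.1)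
  rw [circleIntegral.integral_sub ((hcont.mono sphere_subset_closedBall).circleIntegrable hR)
    (hconj.continuousOn.circleIntegrable hR), sub_eq_zero, circleIntegral.integral_const_mul,
    circleIntegral_conj c hR] at hcauchy
  rw [hcauchy]
  ring

/-- If `φ : D → ℂ` is a smooth map on the closed unit disk with
`∂̄φ = σ` constant (i.e. `∂φ/∂x + i ∂φ/∂y = 2σ`) and `|φ| ≤ R` on `∂D`, then `|σ| ≤ R`. -/
theorem stmt_8 (φ : ℂ → ℂ) (hφ : ContDiff ℝ 1 φ) (σ : ℂ) (R : ℝ)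
    (hdbar : ∀ ζ ∈ Metric.closedBall (0 : ℂ) 1,
      fderiv ℝ φ ζ 1 + Complex.I * fderiv ℝ φ ζ Complex.I = 2 * σ)
    (hbdry : ∀ ζ ∈ Metric.sphere (0 : ℂ) 1, ‖φ ζ‖ ≤ R) :
    ‖σ‖ ≤ R := by
  have hφd : Differentiable ℝ φ := hφ.differentiable one_ne_zero
  have hint : (∮ z in C(0, 1), φ z) = 2 * π * I * σ := by
    simpa using circleIntegral_eq_of_dbar_eq_const zero_le_one hφd.continuous.continuousOn
      (fun z _ => hφd z) fun z hz => hdbar z (ball_subset_closedBall hz)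
  have hbound := circleIntegral.norm_integral_le_of_norm_le_const zero_le_one hbdry
  rw [hint] at hbound
  simp only [norm_mul, Complex.norm_ofNat, norm_real, norm_I, Real.norm_of_nonneg pi_pos.le,
    mul_one] at hbound
  exact le_of_mul_le_mul_left hbound (by positivity)
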